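/- There exists a sequential qubit strategy whose witnesses satisfy W_AB = W_AC = (5 + 2√2)/10; in particular both witnesses strictly exceed the classical bound 3/4, since (5 + 2√2)/10 > 3/4. -/
import Mathlib


open Matrix ComplexOrder

noncomputable section

/-- The bit `x_y` of `x = (x₀, x₁)`. -/
def bit (x : Bool × Bool) (y : Bool) : Bool := if y then x.2 else x.1

/-- Alice–Bob witness `W_AB = (1/8) ∑_{x,y} tr[ρ_x K_{x_y|y}† K_{x_y|y}]`. -/
def WAB (ρ : Bool × Bool → Matrix (Fin 2) (Fin 2) ℂ)
    (K : Bool → Bool → Matrix (Fin 2) (Fin 2) ℂ) : ℝ :=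
  (1 / 8) * ∑ x : Bool × Bool, ∑ y : Bool,
    ((ρ x * ((K y (bit x y))ᴴ * K y (bit x y))).trace).re

/-- Alice–Charlie witness
`W_AC = (1/16) ∑_{x,y,b,z} tr[K_{b|y} ρ_x K_{b|y}† C_{x_z|z}]`. -/
def WAC (ρ : Bool × Bool → Matrix (Fin 2) (Fin 2) ℂ)
    (K C : Bool → Bool → Matrix (Fin 2) (Fin 2) ℂ) : ℝ :=
  (1 / 16) * ∑ x : Bool × Bool, ∑ y : Bool, ∑ b : Bool, ∑ z : Bool,
    ((K y b * ρ x * (K y b)ᴴ * C z (bit x z)).trace).re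

/-- A sequential qubit strategy: four qubit states, two instruments (Kraus
operators), and two binary POVMs. -/
def ValidStrategy (ρ : Bool × Bool → Matrix (Fin 2) (Fin 2) ℂ)
    (K C : Bool → Bool → Matrix (Fin 2) (Fin 2) ℂ) : Prop :=
  (∀ x, (ρ x).PosSemidef ∧ (ρ x).trace = 1) ∧
  (∀ y, (K y false)ᴴ * K y false + (K y true)ᴴ * K y true = 1) ∧
  (∀ z b, (C z b).PosSemidef) ∧
  (∀ z, C z false + C z true = 1)

/-- √2 -/
def rr : ℝ := Real.sqrt 2
/-- √10 -/
def tt : ℝ := Real.sqrt 10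

def Rρ : Bool × Bool → Matrix (Fin 2) (Fin 2) ℝ
  | (false, false) => !![(2 + rr)/4, rr/4; rr/4, (2 - rr)/4]
  | (false, true)  => !![(2 + rr)/4, -(rr/4); -(rr/4), (2 - rr)/4]
  | (true, false)  => !![(2 - rr)/4, rr/4; rr/4, (2 + rr)/4]
  | (true, true)   => !![(2 - rr)/4, -(rr/4); -(rr/4), (2 + rr)/4]

def RK : Bool → Bool → Matrix (Fin 2) (Fin 2) ℝ
  | false, false => !![3*tt/10, 0; 0, tt/10]
  | false, true  => !![tt/10, 0; 0, 3*tt/10]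
  | true, false  => !![2*tt/10, tt/10; tt/10, 2*tt/10]
  | true, true   => !![2*tt/10, -(tt/10); -(tt/10), 2*tt/10]

def RC : Bool → Bool → Matrix (Fin 2) (Fin 2) ℝ
  | false, false => !![1, 0; 0, 0]
  | false, true  => !![0, 0; 0, 1]
  | true, false  => !![1/2, 1/2; 1/2, 1/2]
  | true, true   => !![1/2, -(1/2); -(1/2), 1/2]

def pp : ℝ := Real.sqrt (2 + rr) / 2
def qq : ℝ := Real.sqrt (2 - rr) / 2

def RB : Bool × Bool → Matrix (Fin 2) (Fin 2) ℝ
  | (false, false) => !![pp, qq; 0, 0]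
  | (false, true)  => !![pp, -qq; 0, 0]
  | (true, false)  => !![qq, pp; 0, 0]
  | (true, true)   => !![qq, -pp; 0, 0]

def cmap (A : Matrix (Fin 2) (Fin 2) ℝ) : Matrix (Fin 2) (Fin 2) ℂ :=
  A.map Complex.ofReal

lemma cmap_mul (A B : Matrix (Fin 2) (Fin 2) ℝ) :
    cmap A * cmap B = cmap (A * B) := by
  ext i j
  simp [cmap, Matrix.mul_apply, Matrix.map_apply]

lemma cmap_ct (A : Matrix (Fin 2) (Fin 2) ℝ) : (cmap A)ᴴ = cmap Aᵀ := by
  ext i j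
  simp [cmap, Matrix.conjTranspose_apply, Matrix.map_apply, Matrix.transpose_apply,
    Complex.conj_ofReal]

lemma cmap_add (A B : Matrix (Fin 2) (Fin 2) ℝ) :
    cmap A + cmap B = cmap (A + B) := by
  ext i j
  simp [cmap, Matrix.add_apply, Matrix.map_apply]

lemma cmap_one : cmap 1 = 1 := by
  ext i j
  fin_cases i <;> fin_cases j <;> simp [cmap, Matrix.map_apply, Matrix.one_apply]

lemma cmap_trace (A : Matrix (Fin 2) (Fin 2) ℝ) :
    (cmap A).trace = (A.trace : ℂ) := by
  simp [cmap, Matrix.trace, Matrix.diag, Matrix.map_apply, Fin.sum_univ_two]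

lemma htt : tt * tt = 10 := Real.mul_self_sqrt (by norm_num)

lemma hrr : rr * rr = 2 := Real.mul_self_sqrt (by norm_num)

lemma hrr_nonneg : 0 ≤ rr := Real.sqrt_nonneg 2

lemma hrr_le : rr ≤ 2 := by
  rw [show (2:ℝ) = Real.sqrt 4 by rw [show (4:ℝ) = 2^2 by norm_num, Real.sqrt_sq] <;> norm_num]
  exact Real.sqrt_le_sqrt (by norm_num)

lemma hpp : pp * pp = (2 + rr) / 4 := by
  unfold pp
  rw [div_mul_div_comm, Real.mul_self_sqrt (by linarith [hrr_nonneg])]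
  norm_num

lemma hqq : qq * qq = (2 - rr) / 4 := by
  unfold qq
  rw [div_mul_div_comm, Real.mul_self_sqrt (by linarith [hrr_le])]
  norm_num

lemma hpq : pp * qq = rr / 4 := by
  unfold pp qq
  rw [div_mul_div_comm, ← Real.sqrt_mul (by linarith [hrr_nonneg])]
  have : (2 + rr) * (2 - rr) = 2 := by ring_nf; linear_combination -hrr
  rw [this]
  rw [show Real.sqrt 2 = rr from rfl]
  norm_num

lemma RB_spec (x : Bool × Bool) : (RB x)ᵀ * RB x = Rρ x := by
  obtain ⟨x0, x1⟩ := x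
  obtain hpp := hpp
  obtain hqq := hqq
  obtain hpq := hpq
  cases x0 <;> cases x1 <;>
    · ext i j
      fin_cases i <;> fin_cases j <;>
        · simp [RB, Rρ, Matrix.mul_apply, Fin.sum_univ_two]
          ring_nf
          ring_nf at hpp hqq hpq
          linarith [hpp, hqq, hpq]

lemma RK_symm (y b : Bool) : (RK y b)ᵀ = RK y b := by
  cases y <;> cases b <;> (ext i j; fin_cases i <;> fin_cases j <;> rfl)

lemma RC_symm (z b : Bool) : (RC z b)ᵀ = RC z b := by
  cases z <;> cases b <;> (ext i j; fin_cases i <;> fin_cases j <;> rfl)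

lemma hK_ct (y b : Bool) : (cmap (RK y b))ᴴ = cmap (RK y b) :=
  (cmap_ct _).trans (congrArg cmap (RK_symm y b))

lemma hC_ct (z b : Bool) : (cmap (RC z b))ᴴ = cmap (RC z b) :=
  (cmap_ct _).trans (congrArg cmap (RC_symm z b))

lemma RC_proj (z b : Bool) : RC z b * RC z b = RC z b := by
  cases z <;> cases b <;>
    · ext i j
      fin_cases i <;> fin_cases j <;>
        · simp [RC, Matrix.mul_apply, Fin.sum_univ_two]
          try norm_num

lemma RK_kraus (y : Bool) :
    (RK y false)ᵀ * RK y false + (RK y true)ᵀ * RK y true = 1 := by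
  have h := htt
  have h2 : tt ^ 2 = 10 := by rw [sq]; exact htt
  rw [RK_symm, RK_symm]
  cases y <;>
    · ext i j
      fin_cases i <;> fin_cases j <;>
        simp [RK, Matrix.mul_apply, Matrix.add_apply, Matrix.one_apply,
          Fin.sum_univ_two] <;>
        ring_nf <;> linarith [h2]

lemma Rρ_trace (x : Bool × Bool) : (Rρ x).trace = 1 := by
  obtain ⟨x0, x1⟩ := x
  cases x0 <;> cases x1 <;>
    · simp [Rρ, Matrix.trace_fin_two_of]
      ring

/-- There is a sequential qubit strategy with
`W_AB = W_AC = (5 + 2√2)/10`, and this value exceeds the classical bound `3/4`. -/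
theorem sequential_qrac_double_violation :
    (∃ (ρ : Bool × Bool → Matrix (Fin 2) (Fin 2) ℂ)
       (K C : Bool → Bool → Matrix (Fin 2) (Fin 2) ℂ),
       ValidStrategy ρ K C ∧
       WAB ρ K = (5 + 2 * Real.sqrt 2) / 10 ∧
       WAC ρ K C = (5 + 2 * Real.sqrt 2) / 10) ∧
    (5 + 2 * Real.sqrt 2) / 10 > 3 / 4 := by
  have h2 : tt ^ 2 = 10 := by rw [sq]; exact htt
  constructor
  · refine ⟨fun x => cmap (Rρ x), fun y b => cmap (RK y b), fun z b => cmap (RC z b),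
      ⟨?_, ?_, ?_, ?_⟩, ?_, ?_⟩
    · intro x
      refine ⟨?_, ?_⟩
      · show (cmap (Rρ x)).PosSemidef
        rw [show cmap (Rρ x) = (cmap (RB x))ᴴ * cmap (RB x) by
          rw [cmap_ct, cmap_mul, RB_spec]]
        exact Matrix.posSemidef_conjTranspose_mul_self _
      · show (cmap (Rρ x)).trace = 1
        rw [cmap_trace, Rρ_trace]; norm_num
    · intro y
      show (cmap (RK y false))ᴴ * cmap (RK y false) +
          (cmap (RK y true))ᴴ * cmap (RK y true) = 1
      rw [cmap_ct, cmap_ct, cmap_mul, cmap_mul, cmap_add, RK_kraus, cmap_one]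
    · intro z b
      show (cmap (RC z b)).PosSemidef
      rw [show cmap (RC z b) = (cmap (RC z b))ᴴ * cmap (RC z b) by
        rw [hC_ct, cmap_mul, RC_proj]]
      exact Matrix.posSemidef_conjTranspose_mul_self _
    · intro z
      show cmap (RC z false) + cmap (RC z true) = 1
      rw [cmap_add]
      rw [show RC z false + RC z true = 1 by
        cases z <;>
          · ext i j
            fin_cases i <;> fin_cases j <;>
              simp [RC, Matrix.add_apply, Matrix.one_apply] <;> norm_num]
      exact cmap_one
    · show WAB (fun x => cmap (Rρ x)) (fun y b => cmap (RK y b)) = _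
      simp only [WAB, Fintype.sum_prod_type, Fintype.sum_bool, bit, if_true, if_false,
        Bool.false_eq_true, Bool.true_eq_false, ite_true, ite_false]
      simp only [hK_ct, cmap_mul, cmap_trace, Complex.ofReal_re]
      simp only [Rρ, RK, Matrix.mul_fin_two, Matrix.trace_fin_two_of]
      rw [show Real.sqrt 2 = rr from rfl]
      linear_combination (1/20 + rr/50) * htt
    · show WAC (fun x => cmap (Rρ x)) (fun y b => cmap (RK y b)) (fun z b => cmap (RC z b)) = _
      simp only [WAC, Fintype.sum_prod_type, Fintype.sum_bool, bit, if_true, if_false,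
        Bool.false_eq_true, Bool.true_eq_false, ite_true, ite_false]
      simp only [hK_ct, cmap_mul, cmap_trace, Complex.ofReal_re]
      simp only [Rρ, RK, RC, Matrix.mul_fin_two, Matrix.trace_fin_two_of]
      rw [show Real.sqrt 2 = rr from rfl]
      linear_combination (1/20 + rr/50) * htt
  · nlinarith [Real.sqrt_nonneg 2, Real.sq_sqrt (by norm_num : (0:ℝ) ≤ 2)]

end
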